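/- Let (Ω, F, μ) be a probability space, A, B sub-σ-algebras, c = ψ'(A,B), p, q ∈ [1,∞] conjugate exponents (1/p + 1/q = 1). If ξ is A-measurable with ξ ∈ L^p and Eξ = 0, and η is B-measurable with η ∈ L^q, then |E(ξη)| ≤ (1 - c)‖ξ‖_p‖η‖_q. -/

import Mathlib

open MeasureTheory
open scoped ENNReal

/-- The dependence coefficient
`ψ'(𝒜, ℬ) = inf { μ(A ∩ B) / (μ A * μ B) : A ∈ 𝒜, B ∈ ℬ, μ A > 0, μ B > 0 }`,
interpreted as `1` when no such pair of sets exists. -/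
noncomputable def psi' {Ω : Type*} {m0 : MeasurableSpace Ω} (μ : Measure Ω)
    (mA mB : MeasurableSpace Ω) : ℝ :=
  open Classical in
  letI S : Set ℝ := {r | ∃ A B, MeasurableSet[mA] A ∧ MeasurableSet[mB] B ∧
    0 < μ A ∧ 0 < μ B ∧ r = (μ (A ∩ B)).toReal / ((μ A).toReal * (μ B).toReal)}
  if S.Nonempty then sInf S else 1

/-! Let `ν` be the law of `ω ↦ (ω, ω)` on `(Ω × Ω, 𝒜 ⊗ ℬ)` and `P = μ|𝒜 ⊗ μ|ℬ`, and write
`c = ψ'(𝒜, ℬ)`. The definition of `ψ'` gives `c • P ≤ ν` on rectangles, hence on all of `𝒜 ⊗ ℬ`,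
because finite disjoint unions of rectangles approximate every measurable set. So `ν = ρ + c • P`
with `ρ ≥ 0`. As `E ξ = 0`, the part `c • P` contributes nothing to `E(ξη) = ∫ ξ(x) η(y) dν`, and
both marginals of `ρ` equal `(1 - c) μ`; Hölder's inequality for `ρ` then bounds `|E(ξη)|` by
`(1 - c)^(1/p) ‖ξ‖_p (1 - c)^(1/q) ‖η‖_q`. -/

open Set MeasurableSpace
open scoped symmDiff

namespace MeasureTheory

variable {α β : Type*}

theorem isSetSemiring_measurableSet_prod [MeasurableSpace α] [MeasurableSpace β] :
    IsSetSemiring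
      (image2 (· ×ˢ ·) {s : Set α | MeasurableSet s} {t : Set β | MeasurableSet t}) where
  empty_mem := ⟨∅, .empty, ∅, .empty, prod_empty⟩
  inter_mem := by
    rintro _ ⟨s, hs, t, ht, rfl⟩ _ ⟨s', hs', t', ht', rfl⟩
    exact ⟨s ∩ s', hs.inter hs', t ∩ t', ht.inter ht', prod_inter_prod.symm⟩
  sdiff_eq_sUnion' := by
    classical
    rintro _ ⟨s, hs, t, ht, rfl⟩ _ ⟨s', hs', t', ht', rfl⟩
    refine ⟨{s ×ˢ (t \ t'), (s \ s') ×ˢ (t ∩ t')}, ?_, ?_, ?_⟩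
    · simp only [Finset.coe_insert, Finset.coe_singleton, insert_subset_iff,
        singleton_subset_iff]
      exact ⟨mem_image2_of_mem hs (ht.diff ht'), mem_image2_of_mem (hs.diff hs') (ht.inter ht')⟩
    · simp only [Finset.coe_insert, Finset.coe_singleton]
      refine (pairwiseDisjoint_singleton _ _).insert fun _ hj _ => ?_
      rw [mem_singleton_iff.1 hj]
      exact disjoint_prod.2 (Or.inr (disjoint_sdiff_left.mono_right inter_subset_right))
    · ext ⟨x, y⟩
      simp only [Finset.coe_insert, Finset.coe_singleton, sUnion_insert, sUnion_singleton]
      simp only [mem_sdiff, mem_prod, mem_union, mem_inter_iff]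
      tauto

theorem Measure.le_of_isSetSemiring [mα : MeasurableSpace α] {μ ν : Measure α}
    [IsFiniteMeasure ν] {C : Set (Set α)} (hC : IsSetSemiring C) (hgen : mα = generateFrom C)
    (huniv : univ ∈ C) (hle : ∀ s ∈ C, μ s ≤ ν s) : μ ≤ ν := by
  have : IsFiniteMeasure μ := ⟨(hle _ huniv).trans_lt (measure_lt_top ν univ)⟩
  have hsup : ∀ t ∈ supClosure C, μ t ≤ ν t := by
    intro t ht
    obtain ⟨P, hPC⟩ := hC.mem_supClosure_iff.1 ht
    have hmeas : ∀ s ∈ P.parts, MeasurableSet s := fun s hs =>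
      hgen ▸ measurableSet_generateFrom (hPC hs)
    rw [← P.sup_parts, Finset.sup_set_eq_biUnion, measure_biUnion_finset P.disjoint hmeas,
      measure_biUnion_finset P.disjoint hmeas]
    exact Finset.sum_le_sum fun s hs => hle s (hPC hs)
  refine Measure.le_iff.2 fun S hS => ENNReal.le_of_forall_pos_le_add fun ε hε _ => ?_
  obtain ⟨t, htC, ht⟩ := exists_measure_symmDiff_lt_of_generateFrom_isSetSemiring (μ := μ + ν)
    hC ⟨{univ}, countable_singleton _, singleton_subset_iff.2 huniv, by simp⟩ hgen hS
    (ENNReal.coe_pos.2 hε)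
  calc μ S ≤ μ t + μ (S ∆ t) := tsub_le_iff_left.1 le_measure_symmDiff
    _ ≤ ν t + μ (t ∆ S) := by rw [symmDiff_comm]; exact add_le_add_left (hsup t htC) _
    _ ≤ ν S + ν (t ∆ S) + μ (t ∆ S) := by gcongr; exact tsub_le_iff_left.1 le_measure_symmDiff
    _ = ν S + (μ + ν) (t ∆ S) := by rw [Measure.add_apply]; ring
    _ ≤ ν S + ε := by gcongr

theorem Measure.eq_one_sub_smul_of_add_smul_eq [MeasurableSpace α] {κ m : Measure α}
    [IsFiniteMeasure m] {c : ℝ≥0∞} (h : κ + c • m = m) : κ = (1 - c) • m := by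
  ext s hs
  have hs' : κ s + c * m s = m s := by simpa using congrArg (· s) h
  have hcm : c * m s ≠ ∞ := ne_top_of_le_ne_top (measure_ne_top m s) (le_add_self.trans_eq hs')
  rw [Measure.smul_apply, smul_eq_mul, ENNReal.sub_mul fun _ _ => measure_ne_top m s, one_mul,
    ENNReal.eq_sub_of_add_eq hcm hs']

theorem _root_.ENNReal.rpow_toReal_inv_mul_rpow_toReal_inv (a : ℝ≥0∞) {p q : ℝ≥0∞}
    (hpq : p⁻¹ + q⁻¹ = 1) : a ^ p⁻¹.toReal * a ^ q⁻¹.toReal = a := by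
  have hp : p⁻¹ ≠ ∞ := ne_top_of_le_ne_top ENNReal.one_ne_top (hpq ▸ le_self_add)
  have hq : q⁻¹ ≠ ∞ := ne_top_of_le_ne_top ENNReal.one_ne_top (hpq ▸ le_add_self)
  rw [← ENNReal.rpow_add_of_nonneg _ _ ENNReal.toReal_nonneg ENNReal.toReal_nonneg,
    ← ENNReal.toReal_add hp hq, hpq, ENNReal.toReal_one, ENNReal.rpow_one]

variable [mα : MeasurableSpace α] [mβ : MeasurableSpace β] {𝕜 : Type*} [RCLike 𝕜]

theorem enorm_integral_mul_le_eLpNorm_map_fst_mul_eLpNorm_map_snd {ρ : Measure (α × β)}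
    {p q : ℝ≥0∞} (hpq : p⁻¹ + q⁻¹ = 1) {f : α → 𝕜} {g : β → 𝕜}
    (hf : AEStronglyMeasurable f (ρ.map Prod.fst)) (hg : AEStronglyMeasurable g (ρ.map Prod.snd)) :
    ‖∫ z, f z.1 * g z.2 ∂ρ‖ₑ ≤ eLpNorm f p (ρ.map Prod.fst) * eLpNorm g q (ρ.map Prod.snd) := by
  have : ENNReal.HolderTriple p q 1 := ENNReal.holderConjugate_iff.2 hpq
  rw [eLpNorm_map_measure hf measurable_fst.aemeasurable,
    eLpNorm_map_measure hg measurable_snd.aemeasurable]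
  calc ‖∫ z, f z.1 * g z.2 ∂ρ‖ₑ ≤ eLpNorm (fun z => f z.1 * g z.2) 1 ρ := by
        rw [eLpNorm_one_eq_lintegral_enorm]; exact enorm_integral_le_lintegral_enorm _
    _ ≤ eLpNorm (f ∘ Prod.fst) p ρ * eLpNorm (g ∘ Prod.snd) q ρ :=
        eLpNorm_smul_le_mul_eLpNorm (r := 1) (f := g ∘ Prod.snd) (φ := f ∘ Prod.fst)
          (hg.comp_measurable measurable_snd) (hf.comp_measurable measurable_fst)

variable {Ω : Type*} [mΩ : MeasurableSpace Ω] (μ : Measure Ω) {X : Ω → α} {Y : Ω → β}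

theorem smul_prod_map_le_map_prodMk [IsFiniteMeasure μ] (hX : Measurable X) (hY : Measurable Y)
    {c : ℝ≥0∞} (hc : ∀ A B, MeasurableSet A → MeasurableSet B →
      c * (μ (X ⁻¹' A) * μ (Y ⁻¹' B)) ≤ μ (X ⁻¹' A ∩ Y ⁻¹' B)) :
    c • (μ.map X).prod (μ.map Y) ≤ μ.map fun ω => (X ω, Y ω) := by
  refine Measure.le_of_isSetSemiring isSetSemiring_measurableSet_prod generateFrom_prod.symm
    ⟨univ, .univ, univ, .univ, univ_prod_univ⟩ ?_
  rintro _ ⟨A, hA, B, hB, rfl⟩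
  rw [Measure.smul_apply, Measure.prod_prod, Measure.map_apply hX hA, Measure.map_apply hY hB,
    Measure.map_apply (hX.prodMk hY) (hA.prod hB), smul_eq_mul]
  exact hc A B hA hB

theorem enorm_integral_mul_le_of_smul_prod_le {ν : Measure (α × β)} [IsProbabilityMeasure ν]
    {c : ℝ≥0∞} (hc : c • (ν.map Prod.fst).prod (ν.map Prod.snd) ≤ ν)
    {p q : ℝ≥0∞} (hpq : p⁻¹ + q⁻¹ = 1) {f : α → 𝕜} {g : β → 𝕜}
    (hf : MemLp f p (ν.map Prod.fst)) (hg : MemLp g q (ν.map Prod.snd))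
    (hmean : ∫ x, f x ∂(ν.map Prod.fst) = 0) :
    ‖∫ z, f z.1 * g z.2 ∂ν‖ₑ ≤
      (1 - c) * eLpNorm f p (ν.map Prod.fst) * eLpNorm g q (ν.map Prod.snd) := by
  have : IsProbabilityMeasure (ν.map Prod.fst) :=
    Measure.isProbabilityMeasure_map measurable_fst.aemeasurable
  have : IsProbabilityMeasure (ν.map Prod.snd) :=
    Measure.isProbabilityMeasure_map measurable_snd.aemeasurable
  set P := (ν.map Prod.fst).prod (ν.map Prod.snd)
  have : IsFiniteMeasure (c • P) := isFiniteMeasure_of_le ν hc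
  set ρ := ν - c • P
  have hdecomp : ρ + c • P = ν := Measure.sub_add_cancel_of_le hc
  have hρ_fst : ρ.map Prod.fst = (1 - c) • ν.map Prod.fst := by
    refine Measure.eq_one_sub_smul_of_add_smul_eq ?_
    simpa [Measure.map_add _ _ measurable_fst, Measure.map_smul, P] using
      congrArg (Measure.map Prod.fst) hdecomp
  have hρ_snd : ρ.map Prod.snd = (1 - c) • ν.map Prod.snd := by
    refine Measure.eq_one_sub_smul_of_add_smul_eq ?_
    simpa [Measure.map_add _ _ measurable_snd, Measure.map_smul, P] using
      congrArg (Measure.map Prod.snd) hdecomp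
  have : ENNReal.HolderTriple p q 1 := ENNReal.holderConjugate_iff.2 hpq
  have hfg : Integrable (fun z : α × β => f z.1 * g z.2) ν :=
    memLp_one_iff_integrable.1 <| (hg.comp_of_map measurable_snd.aemeasurable).mul'
      (hf.comp_of_map measurable_fst.aemeasurable)
  have hP : ∫ z, f z.1 * g z.2 ∂P = 0 := by rw [integral_prod_mul, hmean, zero_mul]
  calc ‖∫ z, f z.1 * g z.2 ∂ν‖ₑ = ‖∫ z, f z.1 * g z.2 ∂ρ‖ₑ := by
        rw [← hdecomp, integral_add_measure (hfg.mono_measure Measure.sub_le)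
          (hfg.mono_measure hc), integral_smul_measure, hP, smul_zero, add_zero]
    _ ≤ eLpNorm f p (ρ.map Prod.fst) * eLpNorm g q (ρ.map Prod.snd) :=
        enorm_integral_mul_le_eLpNorm_map_fst_mul_eLpNorm_map_snd hpq (hρ_fst ▸ hf.1.smul_measure _)
          (hρ_snd ▸ hg.1.smul_measure _)
    _ ≤ (1 - c) ^ p⁻¹.toReal * eLpNorm f p (ν.map Prod.fst) *
          ((1 - c) ^ q⁻¹.toReal * eLpNorm g q (ν.map Prod.snd)) := by
        rw [hρ_fst, hρ_snd]
        gcongr <;> simpa only [one_div, smul_eq_mul] using eLpNorm_smul_measure_le _ _ _ _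
    _ = (1 - c) * eLpNorm f p (ν.map Prod.fst) * eLpNorm g q (ν.map Prod.snd) := by
        rw [mul_mul_mul_comm, ENNReal.rpow_toReal_inv_mul_rpow_toReal_inv _ hpq, mul_assoc]

theorem enorm_integral_mul_le_of_smul_prod_map_le [IsProbabilityMeasure μ] (hX : Measurable X)
    (hY : Measurable Y) {c : ℝ≥0∞}
    (hc : c • (μ.map X).prod (μ.map Y) ≤ μ.map fun ω => (X ω, Y ω))
    {p q : ℝ≥0∞} (hpq : p⁻¹ + q⁻¹ = 1) {f : α → 𝕜} {g : β → 𝕜}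
    (hf : StronglyMeasurable f) (hg : StronglyMeasurable g)
    (hfX : MemLp (f ∘ X) p μ) (hgY : MemLp (g ∘ Y) q μ) (hmean : ∫ ω, f (X ω) ∂μ = 0) :
    ‖∫ ω, f (X ω) * g (Y ω) ∂μ‖ₑ ≤ (1 - c) * eLpNorm (f ∘ X) p μ * eLpNorm (g ∘ Y) q μ := by
  have hXY : Measurable fun ω => (X ω, Y ω) := hX.prodMk hY
  have hfst : (μ.map fun ω => (X ω, Y ω)).map Prod.fst = μ.map X :=
    Measure.map_map measurable_fst hXY
  have hsnd : (μ.map fun ω => (X ω, Y ω)).map Prod.snd = μ.map Y :=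
    Measure.map_map measurable_snd hXY
  have : IsProbabilityMeasure (μ.map fun ω => (X ω, Y ω)) :=
    Measure.isProbabilityMeasure_map hXY.aemeasurable
  have key := enorm_integral_mul_le_of_smul_prod_le (hfst ▸ hsnd ▸ hc) hpq
    (hfst ▸ (memLp_map_measure_iff hf.aestronglyMeasurable hX.aemeasurable).2 hfX)
    (hsnd ▸ (memLp_map_measure_iff hg.aestronglyMeasurable hY.aemeasurable).2 hgY)
    (by rwa [hfst, integral_map hX.aemeasurable hf.aestronglyMeasurable])
  have hfg : StronglyMeasurable fun z : α × β => f z.1 * g z.2 :=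
    (hf.comp_measurable measurable_fst).mul (hg.comp_measurable measurable_snd)
  rwa [integral_map hXY.aemeasurable hfg.aestronglyMeasurable, hfst, hsnd,
    eLpNorm_map_measure hf.aestronglyMeasurable hX.aemeasurable,
    eLpNorm_map_measure hg.aestronglyMeasurable hY.aemeasurable] at key

end MeasureTheory

section Psi

variable {Ω : Type*} {m0 : MeasurableSpace Ω} (μ : Measure Ω) (mA mB : MeasurableSpace Ω)

theorem psi'_nonneg : 0 ≤ psi' μ mA mB := by
  unfold psi'
  split_ifs
  · exact Real.sInf_nonneg fun r ⟨A, B, _, _, _, _, hr⟩ => hr ▸ by positivity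
  · exact zero_le_one

theorem psi'_le_div {A B : Set Ω} (hA : MeasurableSet[mA] A) (hB : MeasurableSet[mB] B)
    (hμA : 0 < μ A) (hμB : 0 < μ B) :
    psi' μ mA mB ≤ (μ (A ∩ B)).toReal / ((μ A).toReal * (μ B).toReal) := by
  have hmem : (μ (A ∩ B)).toReal / ((μ A).toReal * (μ B).toReal) ∈
      {r | ∃ A B, MeasurableSet[mA] A ∧ MeasurableSet[mB] B ∧
        0 < μ A ∧ 0 < μ B ∧ r = (μ (A ∩ B)).toReal / ((μ A).toReal * (μ B).toReal)} :=
    ⟨A, B, hA, hB, hμA, hμB, rfl⟩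
  unfold psi'
  rw [if_pos ⟨_, hmem⟩]
  exact csInf_le ⟨0, fun r ⟨A, B, _, _, _, _, hr⟩ => hr ▸ by positivity⟩ hmem

theorem ofReal_psi'_mul_le [IsFiniteMeasure μ] {A B : Set Ω} (hA : MeasurableSet[mA] A)
    (hB : MeasurableSet[mB] B) : ENNReal.ofReal (psi' μ mA mB) * (μ A * μ B) ≤ μ (A ∩ B) := by
  rcases eq_zero_or_pos (μ A) with hμA | hμA
  · simp [hμA]
  rcases eq_zero_or_pos (μ B) with hμB | hμB
  · simp [hμB]
  have hab : 0 < (μ A).toReal * (μ B).toReal :=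
    mul_pos (ENNReal.toReal_pos hμA.ne' (measure_ne_top μ A))
      (ENNReal.toReal_pos hμB.ne' (measure_ne_top μ B))
  calc ENNReal.ofReal (psi' μ mA mB) * (μ A * μ B)
      = ENNReal.ofReal (psi' μ mA mB * ((μ A).toReal * (μ B).toReal)) := by
        rw [ENNReal.ofReal_mul (psi'_nonneg μ mA mB), ENNReal.ofReal_mul ENNReal.toReal_nonneg,
          ENNReal.ofReal_toReal (measure_ne_top μ A), ENNReal.ofReal_toReal (measure_ne_top μ B)]
    _ ≤ ENNReal.ofReal (μ (A ∩ B)).toReal :=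
        ENNReal.ofReal_le_ofReal ((le_div_iff₀ hab).1 (psi'_le_div μ mA mB hA hB hμA hμB))
    _ = μ (A ∩ B) := ENNReal.ofReal_toReal (measure_ne_top μ _)

end Psi

theorem abs_integral_mul_le_general {Ω : Type*} {m0 : MeasurableSpace Ω}
    (μ : Measure Ω) [IsProbabilityMeasure μ]
    (mA mB : MeasurableSpace Ω) (hA : mA ≤ m0) (hB : mB ≤ m0)
    (p q : ℝ≥0∞) (hpq : p⁻¹ + q⁻¹ = 1)
    (ξ η : Ω → ℝ)
    (hξmeas : StronglyMeasurable[mA] ξ) (hξmem : MemLp ξ p μ)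
    (hmean : ∫ ω, ξ ω ∂μ = 0)
    (hηmeas : StronglyMeasurable[mB] η) (hηmem : MemLp η q μ) :
    ENNReal.ofReal |∫ ω, ξ ω * η ω ∂μ| ≤
      ENNReal.ofReal (1 - psi' μ mA mB) * eLpNorm ξ p μ * eLpNorm η q μ := by
  have hX : Measurable[m0, mA] id := measurable_id'' hA
  have hY : Measurable[m0, mB] id := measurable_id'' hB
  have hc := smul_prod_map_le_map_prodMk (mΩ := m0) (mα := mA) (mβ := mB) μ hX hY
    fun A B hA hB => ofReal_psi'_mul_le μ mA mB hA hB
  rw [← Real.enorm_eq_ofReal_abs, ENNReal.ofReal_sub _ (psi'_nonneg μ mA mB), ENNReal.ofReal_one]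
  exact enorm_integral_mul_le_of_smul_prod_map_le (mΩ := m0) (mα := mA) (mβ := mB) μ hX hY hc hpq
    hξmeas hηmeas hξmem hηmem hmean

/-- If `ξ` is `𝒜`-measurable in `L^p` with zero mean and `η` is `ℬ`-measurable in `L^q`,
where `1/p + 1/q = 1`, then `|E(ξη)| ≤ (1 - ψ'(𝒜, ℬ)) ‖ξ‖_p ‖η‖_q`. -/
theorem abs_integral_mul_le {Ω : Type*} {m0 : MeasurableSpace Ω}
    (μ : Measure Ω) [IsProbabilityMeasure μ]
    (mA mB : MeasurableSpace Ω) (hA : mA ≤ m0) (hB : mB ≤ m0)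
    (p q : ℝ≥0∞) (hp : 1 ≤ p) (hq : 1 ≤ q) (hpq : p⁻¹ + q⁻¹ = 1)
    (ξ η : Ω → ℝ)
    (hξmeas : StronglyMeasurable[mA] ξ) (hξmem : MemLp ξ p μ)
    (hmean : ∫ ω, ξ ω ∂μ = 0)
    (hηmeas : StronglyMeasurable[mB] η) (hηmem : MemLp η q μ) :
    ENNReal.ofReal |∫ ω, ξ ω * η ω ∂μ| ≤
      ENNReal.ofReal (1 - psi' μ mA mB) * eLpNorm ξ p μ * eLpNorm η q μ :=
  abs_integral_mul_le_general μ mA mB hA hB p q hpq ξ η hξmeas hξmem hmean hηmeas hηmem
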